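/- Let E, F be Banach ideal spaces such that E is p₀-convex with constant 1, F is p₁-convex with constant 1, and 1/p₀ + 1/p₁ ≤ 1. Then E ⊙ F is a Banach space (the product quasi-norm is a norm, in fact the space is p/2-convex where 1/p = (1/2)(1/p₀ + 1/p₁)). -/

import Mathlib

open MeasureTheory

/-- A Banach ideal space on a measure space: a linear subspace of measurable
functions (mod null sets) with a complete lattice norm having the ideal property,
and a weak unit (saturation). -/
structure IdealSpace {α : Type*} [MeasurableSpace α] (μ : Measure α) where
  carrier : Set (α → ℝ)
  norm : (α → ℝ) → ℝ
  zero_mem : (0 : α → ℝ) ∈ carrier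
  add_mem : ∀ {f g : α → ℝ}, f ∈ carrier → g ∈ carrier → f + g ∈ carrier
  smul_mem : ∀ (c : ℝ) {f : α → ℝ}, f ∈ carrier → c • f ∈ carrier
  norm_nonneg : ∀ f, 0 ≤ norm f
  norm_eq_zero : ∀ f ∈ carrier, (norm f = 0 ↔ f =ᵐ[μ] 0)
  norm_add : ∀ f g, f ∈ carrier → g ∈ carrier → norm (f + g) ≤ norm f + norm g
  norm_smul : ∀ (c : ℝ) (f : α → ℝ), norm (c • f) = |c| * norm f
  ideal_mem : ∀ {f g : α → ℝ}, g ∈ carrier → (∀ᵐ a ∂μ, |f a| ≤ |g a|) → f ∈ carrier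
  ideal_norm : ∀ {f g : α → ℝ}, g ∈ carrier → (∀ᵐ a ∂μ, |f a| ≤ |g a|) → norm f ≤ norm g
  weak_unit : ∃ w ∈ carrier, ∀ᵐ a ∂μ, 0 < w a
  complete : ∀ x : ℕ → α → ℝ, (∀ n, x n ∈ carrier) →
    (∀ ε > 0, ∃ N, ∀ m ≥ N, ∀ n ≥ N, norm (x m - x n) < ε) →
    ∃ f ∈ carrier, Filter.Tendsto (fun n => norm (x n - f)) Filter.atTop (nhds 0)

variable {α : Type*} [MeasurableSpace α] {μ : Measure α}

/-- The pointwise product space E ⊙ F. -/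
def prodSet (E F : IdealSpace μ) : Set (α → ℝ) :=
  {z | ∃ x ∈ E.carrier, ∃ y ∈ F.carrier, z =ᵐ[μ] x * y}

/-- The quasi-norm of the pointwise product space E ⊙ F. -/
noncomputable def prodNorm (E F : IdealSpace μ) (z : α → ℝ) : ℝ :=
  sInf {r | ∃ x ∈ E.carrier, ∃ y ∈ F.carrier, z =ᵐ[μ] x * y ∧ r = E.norm x * F.norm y}

/-- p-convexity with constant K of a normed set of functions. -/
def PConvexOn (S : Set (α → ℝ)) (N : (α → ℝ) → ℝ) (p K : ℝ) : Prop :=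
  ∀ (n : ℕ) (x : Fin n → α → ℝ), (∀ k, x k ∈ S) →
    (fun a => (∑ k, |x k a| ^ p) ^ (1 / p)) ∈ S ∧
    N (fun a => (∑ k, |x k a| ^ p) ^ (1 / p)) ≤ K * (∑ k, N (x k) ^ p) ^ (1 / p)

/-!
If `1/r₀ + 1/r₁ = 1/q`, then `c = c^(q/r₀) * c^(q/r₁)`, so every `z k ∈ E ⊙ F` with
`‖z k‖ < c k` factors as `x k * y k` with `‖x k‖ ≤ (c k)^(q/r₀)` and `‖y k‖ ≤ (c k)^(q/r₁)`.
Hölder's inequality bounds the `ℓ^q`-sum of the `z k` pointwise by the product of the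
`ℓ^r₀`-sum of the `x k` and the `ℓ^r₁`-sum of the `y k`, and the convexity of `E` and `F`
bounds the norms of these factors by `(∑ (c k)^q)^(1/r₀)` and `(∑ (c k)^q)^(1/r₁)`. So `E ⊙ F`
is `q`-convex with constant `1`; with `r₀ = p₀`, `r₁ = p₁` this is `p/2`-convexity.

For the triangle inequality take `q = 1`, `r₀ = p₀` and `r₁ = p₀'` the conjugate exponent, which
is at most `p₁`. This needs that `p`-convexity with constant `1` implies `r`-convexity with
constant `1` for `1 ≤ r ≤ p`: if `w` is the `ℓ^r`-sum of the `y k`, then `w` is also the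
`ℓ^p`-sum of the `|y k|^(r/p) * w^(1-r/p)`, whose norms are at most `‖y k‖^(r/p) ‖w‖^(1-r/p)`
by the interpolation inequality `‖|f|^θ |g|^(1-θ)‖ ≤ ‖f‖^θ ‖g‖^(1-θ)` (weighted AM-GM).
-/

open Real Topology

namespace Real

theorem sum_rpow_le_rpow_sum {ι : Type*} (s : Finset ι) {a : ι → ℝ}
    (ha : ∀ i ∈ s, 0 ≤ a i) {r : ℝ} (hr : 1 ≤ r) : ∑ i ∈ s, a i ^ r ≤ (∑ i ∈ s, a i) ^ r := by
  have hsum : 0 ≤ ∑ i ∈ s, a i := Finset.sum_nonneg ha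
  have hr₀ : r ≠ 0 := (zero_lt_one.trans_le hr).ne'
  calc ∑ i ∈ s, a i ^ r = ∑ i ∈ s, a i * a i ^ (r - 1) := by
        refine Finset.sum_congr rfl fun i hi => ?_
        rw [← rpow_one_add' (ha i hi) (by simpa using hr₀), add_sub_cancel]
    _ ≤ ∑ i ∈ s, a i * (∑ j ∈ s, a j) ^ (r - 1) := by
        gcongr with i hi
        exacts [ha i hi, ha i hi, Finset.single_le_sum ha hi]
    _ = (∑ i ∈ s, a i) ^ r := by
        rw [← Finset.sum_mul, ← rpow_one_add' hsum (by simpa using hr₀), add_sub_cancel]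

theorem rpow_div_mul_rpow_one_sub_div_rpow {s t r p : ℝ} (hs : 0 ≤ s) (ht : 0 ≤ t)
    (hp : p ≠ 0) : (s ^ (r / p) * t ^ (1 - r / p)) ^ p = s ^ r * t ^ (p - r) := by
  rw [mul_rpow (rpow_nonneg hs _) (rpow_nonneg ht _), ← rpow_mul hs, ← rpow_mul ht,
    div_mul_cancel₀ r hp, sub_mul, one_mul, div_mul_cancel₀ r hp]

theorem le_rpow_one_div_of_rpow_le_mul_rpow_sub {N T r p : ℝ} (hN : 0 ≤ N) (hT : 0 ≤ T)
    (hr : 0 < r) (h : N ^ p ≤ T * N ^ (p - r)) : N ≤ T ^ (1 / r) := by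
  rcases hN.eq_or_lt with rfl | hN
  · exact rpow_nonneg hT _
  rw [← add_sub_cancel r p, rpow_add hN, add_sub_cancel_left] at h
  rw [one_div, le_rpow_inv_iff_of_pos hN.le hT hr]
  exact le_of_mul_le_mul_right h (rpow_pos_of_pos hN _)

end Real

noncomputable def lpSum {β : Type*} {n : ℕ} (p : ℝ) (x : Fin n → β → ℝ) : β → ℝ :=
  fun a => (∑ k, |x k a| ^ p) ^ (1 / p)

theorem lpSum_nonneg {β : Type*} {n : ℕ} (p : ℝ) (x : Fin n → β → ℝ) (a : β) :
    0 ≤ lpSum p x a :=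
  rpow_nonneg (Finset.sum_nonneg fun _ _ => rpow_nonneg (abs_nonneg _) _) _

theorem lpSum_mul_le {β : Type*} {n : ℕ} {r₀ r₁ q : ℝ} (hrq : r₀.HolderTriple r₁ q)
    (x y : Fin n → β → ℝ) (a : β) :
    lpSum q (fun k => x k * y k) a ≤ lpSum r₀ x a * lpSum r₁ y a := by
  obtain ⟨hr₀, hr₁, hq⟩ := hrq.all_pos
  have hx : 0 ≤ ∑ k, |x k a| ^ r₀ := Finset.sum_nonneg fun _ _ => rpow_nonneg (abs_nonneg _) _
  have hy : 0 ≤ ∑ k, |y k a| ^ r₁ := Finset.sum_nonneg fun _ _ => rpow_nonneg (abs_nonneg _) _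
  calc lpSum q (fun k => x k * y k) a
      ≤ ((∑ k, |x k a| ^ r₀) ^ (q / r₀) * (∑ k, |y k a| ^ r₁) ^ (q / r₁)) ^ (1 / q) :=
        rpow_le_rpow (Finset.sum_nonneg fun _ _ => rpow_nonneg (abs_nonneg _) _)
          (Lr_rpow_le_Lp_mul_Lq _ (fun k => x k a) (fun k => y k a) hrq) (by positivity)
    _ = lpSum r₀ x a * lpSum r₁ y a := by
        rw [mul_rpow (rpow_nonneg hx _) (rpow_nonneg hy _), ← rpow_mul hx, ← rpow_mul hy]
        congr 2 <;> field_simp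

namespace IdealSpace

variable (E : IdealSpace μ)

theorem norm_zero : E.norm 0 = 0 := by
  simpa using E.norm_smul 0 0

theorem norm_eq_zero_of_ae_eq_zero {f : α → ℝ} (hf : f =ᵐ[μ] 0) : E.norm f = 0 :=
  le_antisymm ((E.ideal_norm E.zero_mem (hf.mono fun a ha => by simp [ha])).trans_eq E.norm_zero)
    (E.norm_nonneg f)

theorem abs_mem {f : α → ℝ} (hf : f ∈ E.carrier) : (fun a => |f a|) ∈ E.carrier :=
  E.ideal_mem hf (.of_forall fun a => (abs_abs (f a)).le)

theorem norm_abs_le {f : α → ℝ} (hf : f ∈ E.carrier) :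
    E.norm (fun a => |f a|) ≤ E.norm f :=
  E.ideal_norm hf (.of_forall fun a => (abs_abs (f a)).le)

theorem sum_mem {ι : Type*} (s : Finset ι) {f : ι → α → ℝ}
    (hf : ∀ i ∈ s, f i ∈ E.carrier) : ∑ i ∈ s, f i ∈ E.carrier :=
  Finset.sum_induction _ (· ∈ E.carrier) (fun _ _ => E.add_mem) E.zero_mem hf

theorem mem_and_norm_le_of_abs_le {f g h : α → ℝ} (hf : f ∈ E.carrier) (hg : g ∈ E.carrier)
    {c d : ℝ} (hc : 0 ≤ c) (hd : 0 ≤ d) (hh : ∀ a, |h a| ≤ c * |f a| + d * |g a|) :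
    h ∈ E.carrier ∧ E.norm h ≤ c * E.norm f + d * E.norm g := by
  have hcf := E.smul_mem c (E.abs_mem hf)
  have hdg := E.smul_mem d (E.abs_mem hg)
  have hdom : ∀ᵐ a ∂μ, |h a| ≤ |(c • (fun a => |f a|) + d • (fun a => |g a|)) a| :=
    .of_forall fun a => (hh a).trans (le_abs_self _)
  refine ⟨E.ideal_mem (E.add_mem hcf hdg) hdom, ?_⟩
  calc E.norm h ≤ E.norm (c • (fun a => |f a|) + d • (fun a => |g a|)) :=
        E.ideal_norm (E.add_mem hcf hdg) hdom
    _ ≤ c * E.norm (fun a => |f a|) + d * E.norm (fun a => |g a|) := by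
        refine (E.norm_add _ _ hcf hdg).trans_eq ?_
        rw [E.norm_smul, E.norm_smul, abs_of_nonneg hc, abs_of_nonneg hd]
    _ ≤ c * E.norm f + d * E.norm g := by
        gcongr
        exacts [E.norm_abs_le hf, E.norm_abs_le hg]

theorem norm_rpow_mul_rpow_le {θ : ℝ} (hθ₀ : 0 < θ) (hθ₁ : θ < 1) {f g : α → ℝ}
    (hf : f ∈ E.carrier) (hg : g ∈ E.carrier) :
    (fun a => |f a| ^ θ * |g a| ^ (1 - θ)) ∈ E.carrier ∧
      E.norm (fun a => |f a| ^ θ * |g a| ^ (1 - θ)) ≤ E.norm f ^ θ * E.norm g ^ (1 - θ) := by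
  -- weighted AM-GM for `|f a| / A` and `|g a| / B`, later taken with `A = ‖f‖`, `B = ‖g‖`
  have amgm : ∀ {A B : ℝ}, 0 < A → 0 < B → ∀ a, |(|f a| ^ θ * |g a| ^ (1 - θ))| ≤
      A ^ θ * B ^ (1 - θ) * θ / A * |f a| + A ^ θ * B ^ (1 - θ) * (1 - θ) / B * |g a| := by
    intro A B hA hB a
    have h := geom_mean_le_arith_mean2_weighted hθ₀.le (by linarith : 0 ≤ 1 - θ)
      (div_nonneg (abs_nonneg (f a)) hA.le) (div_nonneg (abs_nonneg (g a)) hB.le) (by ring)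
    rw [div_rpow (abs_nonneg _) hA.le, div_rpow (abs_nonneg _) hB.le] at h
    rw [abs_of_nonneg (by positivity)]
    calc |f a| ^ θ * |g a| ^ (1 - θ)
        = A ^ θ * B ^ (1 - θ) * (|f a| ^ θ / A ^ θ * (|g a| ^ (1 - θ) / B ^ (1 - θ))) := by
          field_simp
      _ ≤ A ^ θ * B ^ (1 - θ) * (θ * (|f a| / A) + (1 - θ) * (|g a| / B)) := by gcongr
      _ = _ := by ring
  have hmem := (E.mem_and_norm_le_of_abs_le hf hg (by positivity) (by positivity)
    (amgm one_pos one_pos)).1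
  refine ⟨hmem, ?_⟩
  rcases (E.norm_nonneg f).eq_or_lt with hf₀ | hA
  · have hh : (fun a => |f a| ^ θ * |g a| ^ (1 - θ)) =ᵐ[μ] 0 :=
      ((E.norm_eq_zero f hf).1 hf₀.symm).mono fun a ha => by simp [ha, zero_rpow hθ₀.ne']
    rw [E.norm_eq_zero_of_ae_eq_zero hh, ← hf₀, zero_rpow hθ₀.ne', zero_mul]
  rcases (E.norm_nonneg g).eq_or_lt with hg₀ | hB
  · have hh : (fun a => |f a| ^ θ * |g a| ^ (1 - θ)) =ᵐ[μ] 0 :=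
      ((E.norm_eq_zero g hg).1 hg₀.symm).mono fun a ha => by
        simp [ha, zero_rpow (sub_pos.2 hθ₁).ne']
    rw [E.norm_eq_zero_of_ae_eq_zero hh, ← hg₀, zero_rpow (sub_pos.2 hθ₁).ne', mul_zero]
  refine (E.mem_and_norm_le_of_abs_le hf hg (by positivity) (by positivity)
    (amgm hA hB)).2.trans_eq ?_
  field_simp
  ring

theorem lpSum_mem {r : ℝ} (hr : 1 ≤ r) {n : ℕ} {y : Fin n → α → ℝ}
    (hy : ∀ k, y k ∈ E.carrier) : lpSum r y ∈ E.carrier := by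
  refine E.ideal_mem (E.sum_mem Finset.univ fun k _ => E.abs_mem (hy k))
    (.of_forall fun a => ?_)
  rw [Finset.sum_apply, abs_of_nonneg (lpSum_nonneg r y a),
    abs_of_nonneg (Finset.sum_nonneg fun _ _ => abs_nonneg _), lpSum, one_div,
    rpow_inv_le_iff_of_pos (by positivity) (by positivity) (zero_lt_one.trans_le hr)]
  exact sum_rpow_le_rpow_sum _ (fun _ _ => abs_nonneg _) hr

theorem norm_lpSum_le {r K : ℝ} (hE : PConvexOn E.carrier E.norm r K) (hr : 0 < r)
    (hK : 0 ≤ K) {n : ℕ} {x : Fin n → α → ℝ} (hx : ∀ k, x k ∈ E.carrier) {c : Fin n → ℝ}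
    (hc : ∀ k, 0 ≤ c k) {q : ℝ} (hxc : ∀ k, E.norm (x k) ≤ c k ^ (q / r)) :
    E.norm (lpSum r x) ≤ K * (∑ k, c k ^ q) ^ (1 / r) := by
  refine (hE n x hx).2.trans (mul_le_mul_of_nonneg_left (rpow_le_rpow
    (Finset.sum_nonneg fun _ _ => rpow_nonneg (E.norm_nonneg _) _) ?_ (by positivity)) hK)
  refine Finset.sum_le_sum fun k _ => ?_
  calc E.norm (x k) ^ r ≤ (c k ^ (q / r)) ^ r := rpow_le_rpow (E.norm_nonneg _) (hxc k) hr.le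
    _ = c k ^ q := by rw [← rpow_mul (hc k), div_mul_cancel₀ q hr.ne']

end IdealSpace

theorem lpSum_interpolation {β : Type*} {n : ℕ} {p r : ℝ} (hr : r ≠ 0) (hp : p ≠ 0)
    (y : Fin n → β → ℝ) :
    lpSum p (fun k a => |y k a| ^ (r / p) * |lpSum r y a| ^ (1 - r / p)) = lpSum r y := by
  funext a
  set w := lpSum r y a with hw
  have hw₀ : 0 ≤ w := lpSum_nonneg r y a
  have hS : ∑ k, |y k a| ^ r = w ^ r := by
    rw [hw, lpSum, one_div, rpow_inv_rpow (by positivity) hr]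
  calc (∑ k, |(|y k a| ^ (r / p) * |w| ^ (1 - r / p))| ^ p) ^ (1 / p)
      = (∑ k, |y k a| ^ r * w ^ (p - r)) ^ (1 / p) := by
        congr 1
        refine Finset.sum_congr rfl fun k _ => ?_
        rw [abs_of_nonneg hw₀, abs_of_nonneg (by positivity),
          rpow_div_mul_rpow_one_sub_div_rpow (abs_nonneg _) hw₀ hp]
    _ = (w ^ p) ^ (1 / p) := by
        rw [← Finset.sum_mul, hS, ← rpow_add' hw₀ (by simpa using hp), add_sub_cancel]
    _ = w := by rw [one_div, rpow_rpow_inv hw₀ hp]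

theorem PConvexOn.of_le {F : IdealSpace μ} {p r : ℝ} (hr : 1 ≤ r) (hrp : r ≤ p)
    (hF : PConvexOn F.carrier F.norm p 1) : PConvexOn F.carrier F.norm r 1 := by
  rcases hrp.eq_or_lt with rfl | hrp
  · exact hF
  have hr₀ : 0 < r := zero_lt_one.trans_le hr
  have hp₀ : 0 < p := hr₀.trans hrp
  intro n y hy
  set w := lpSum r y
  have hw_mem : w ∈ F.carrier := F.lpSum_mem hr hy
  refine ⟨hw_mem, ?_⟩
  have hu k :=
    F.norm_rpow_mul_rpow_le (div_pos hr₀ hp₀) ((div_lt_one hp₀).2 hrp) (hy k) hw_mem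
  have hN : F.norm w ^ p ≤ (∑ k, F.norm (y k) ^ r) * F.norm w ^ (p - r) := by
    have h := (hF n _ fun k => (hu k).1).2
    change F.norm (lpSum p _) ≤ _ at h
    rw [lpSum_interpolation hr₀.ne' hp₀.ne', one_mul, one_div, le_rpow_inv_iff_of_pos
      (F.norm_nonneg w) (Finset.sum_nonneg fun _ _ => rpow_nonneg (F.norm_nonneg _) _) hp₀] at h
    calc F.norm w ^ p ≤ _ := h
      _ ≤ ∑ k, (F.norm (y k) ^ (r / p) * F.norm w ^ (1 - r / p)) ^ p := by
          gcongr with k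
          exacts [F.norm_nonneg _, (hu k).2]
      _ = (∑ k, F.norm (y k) ^ r) * F.norm w ^ (p - r) := by
          rw [Finset.sum_mul]
          exact Finset.sum_congr rfl fun k _ =>
            rpow_div_mul_rpow_one_sub_div_rpow (F.norm_nonneg _) (F.norm_nonneg w) hp₀.ne'
  rw [one_mul]
  exact le_rpow_one_div_of_rpow_le_mul_rpow_sub (F.norm_nonneg w)
    (Finset.sum_nonneg fun _ _ => rpow_nonneg (F.norm_nonneg _) _) hr₀ hN

section Product

variable {E F : IdealSpace μ}

theorem prodNorm_nonneg (z : α → ℝ) : 0 ≤ prodNorm E F z :=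
  sInf_nonneg fun _ ⟨x, _, y, _, _, hr⟩ => hr ▸ mul_nonneg (E.norm_nonneg x) (F.norm_nonneg y)

theorem prodNorm_le {x y z : α → ℝ} (hx : x ∈ E.carrier) (hy : y ∈ F.carrier)
    (hz : z =ᵐ[μ] x * y) : prodNorm E F z ≤ E.norm x * F.norm y :=
  csInf_le ⟨0, fun _ ⟨x, _, y, _, _, hr⟩ =>
    hr ▸ mul_nonneg (E.norm_nonneg x) (F.norm_nonneg y)⟩ ⟨x, hx, y, hy, hz, rfl⟩

theorem mem_prodSet_and_prodNorm_le_of_ae_abs_le_mul {w x y : α → ℝ} (hx : x ∈ E.carrier)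
    (hy : y ∈ F.carrier) (h : ∀ᵐ a ∂μ, |w a| ≤ |x a * y a|) :
    w ∈ prodSet E F ∧ prodNorm E F w ≤ E.norm x * F.norm y := by
  -- factor `w = x * (w / x)`; where `x` vanishes so does `w`, and `w a / 0 = 0`
  have hdiv : ∀ᵐ a ∂μ, |(w / x) a| ≤ |y a| := h.mono fun a ha => by
    rcases eq_or_ne (x a) 0 with hxa | hxa
    · simp [hxa]
    · rwa [Pi.div_apply, abs_div, div_le_iff₀ (abs_pos.2 hxa), ← abs_mul, mul_comm]
  have hw : w =ᵐ[μ] x * (w / x) := h.mono fun a ha => by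
    rcases eq_or_ne (x a) 0 with hxa | hxa
    · simpa [hxa] using ha
    · simp [mul_div_cancel₀ _ hxa]
  have hmem := F.ideal_mem hy hdiv
  exact ⟨⟨x, hx, _, hmem, hw⟩, (prodNorm_le hx hmem hw).trans
    (mul_le_mul_of_nonneg_left (F.ideal_norm hy hdiv) (E.norm_nonneg x))⟩

theorem mem_prodSet_of_ae_abs_le {v w : α → ℝ} (hv : v ∈ prodSet E F)
    (h : ∀ᵐ a ∂μ, |w a| ≤ |v a|) : w ∈ prodSet E F := by
  obtain ⟨x, hx, y, hy, hv⟩ := hv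
  refine (mem_prodSet_and_prodNorm_le_of_ae_abs_le_mul hx hy ?_).1
  filter_upwards [h, hv] with a ha hva
  rwa [← Pi.mul_apply, ← hva]

theorem prodNorm_le_of_ae_abs_le {v w : α → ℝ} (hv : v ∈ prodSet E F)
    (h : ∀ᵐ a ∂μ, |w a| ≤ |v a|) : prodNorm E F w ≤ prodNorm E F v := by
  obtain ⟨x, hx, y, hy, hv⟩ := hv
  refine le_csInf ⟨_, x, hx, y, hy, hv, rfl⟩ ?_
  rintro _ ⟨x, hx, y, hy, hv, rfl⟩
  refine (mem_prodSet_and_prodNorm_le_of_ae_abs_le_mul hx hy ?_).2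
  filter_upwards [h, hv] with a ha hva
  rwa [← Pi.mul_apply, ← hva]

theorem exists_ae_eq_mul_norm_le {z : α → ℝ} (hz : z ∈ prodSet E F) {c₀ c₁ : ℝ}
    (hc₀ : 0 < c₀) (hc₁ : 0 < c₁) (h : prodNorm E F z < c₀ * c₁) :
    ∃ x ∈ E.carrier, ∃ y ∈ F.carrier,
      z =ᵐ[μ] x * y ∧ E.norm x ≤ c₀ ∧ F.norm y ≤ c₁ := by
  obtain ⟨x₀, hx₀, y₀, hy₀, hz₀⟩ := hz
  obtain ⟨_, ⟨x, hx, y, hy, hz, rfl⟩, hlt⟩ :=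
    exists_lt_of_csInf_lt (by exact ⟨_, x₀, hx₀, y₀, hy₀, hz₀, rfl⟩) h
  rcases (E.norm_nonneg x).eq_or_lt with hxn | hxn
  · refine ⟨x, hx, 0, F.zero_mem, ?_, hxn ▸ hc₀.le, F.norm_zero ▸ hc₁.le⟩
    filter_upwards [hz, (E.norm_eq_zero x hx).1 hxn.symm] with a hza hxa
    simp [hza, hxa]
  have ht : 0 < c₀ / E.norm x := div_pos hc₀ hxn
  refine ⟨(c₀ / E.norm x) • x, E.smul_mem _ hx, (c₀ / E.norm x)⁻¹ • y, F.smul_mem _ hy,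
    ?_, ?_, ?_⟩
  · filter_upwards [hz] with a ha
    simp only [ha, Pi.mul_apply, Pi.smul_apply, smul_eq_mul]
    field_simp
  · rw [E.norm_smul, abs_of_pos ht, div_mul_cancel₀ _ hxn.ne']
  · rw [F.norm_smul, abs_of_pos (inv_pos.2 ht), inv_div, div_mul_eq_mul_div, div_le_iff₀ hc₀]
    linarith

variable {r₀ r₁ q K₀ K₁ : ℝ}

theorem lpSum_mem_prodSet_and_prodNorm_le (hrq : r₀.HolderTriple r₁ q) (hK₀ : 0 ≤ K₀)
    (hK₁ : 0 ≤ K₁) (hE : PConvexOn E.carrier E.norm r₀ K₀)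
    (hF : PConvexOn F.carrier F.norm r₁ K₁) {n : ℕ} {z : Fin n → α → ℝ}
    (hz : ∀ k, z k ∈ prodSet E F) {c : Fin n → ℝ} (hc : ∀ k, prodNorm E F (z k) < c k) :
    lpSum q z ∈ prodSet E F ∧
      prodNorm E F (lpSum q z) ≤ K₀ * K₁ * (∑ k, c k ^ q) ^ (1 / q) := by
  obtain ⟨hr₀, hr₁, hq⟩ := hrq.all_pos
  have hexp : q / r₀ + q / r₁ = 1 := by
    simpa only [inv_div] using hrq.holderConjugate_div_div.inv_add_inv_eq_one
  have hc₀ k : 0 < c k := (prodNorm_nonneg _).trans_lt (hc k)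
  have hfactor k : ∃ x ∈ E.carrier, ∃ y ∈ F.carrier, z k =ᵐ[μ] x * y ∧
      E.norm x ≤ c k ^ (q / r₀) ∧ F.norm y ≤ c k ^ (q / r₁) := by
    refine exists_ae_eq_mul_norm_le (hz k) (rpow_pos_of_pos (hc₀ k) _)
      (rpow_pos_of_pos (hc₀ k) _) ?_
    rw [← rpow_add (hc₀ k), hexp, rpow_one]
    exact hc k
  choose x hx y hy hzxy hxc hyc using hfactor
  have hdom : ∀ᵐ a ∂μ, |lpSum q z a| ≤ |lpSum r₀ x a * lpSum r₁ y a| := by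
    filter_upwards [ae_all_iff.2 hzxy] with a ha
    rw [abs_of_nonneg (lpSum_nonneg _ _ _),
      abs_of_nonneg (mul_nonneg (lpSum_nonneg _ _ _) (lpSum_nonneg _ _ _))]
    have hzxy_a : lpSum q z a = lpSum q (fun k => x k * y k) a := by simp only [lpSum, ha]
    exact hzxy_a ▸ lpSum_mul_le hrq x y a
  obtain ⟨hmem, hle⟩ :=
    mem_prodSet_and_prodNorm_le_of_ae_abs_le_mul (hE n x hx).1 (hF n y hy).1 hdom
  refine ⟨hmem, hle.trans ?_⟩
  have hS : 0 ≤ ∑ k, c k ^ q := Finset.sum_nonneg fun k _ => rpow_nonneg (hc₀ k).le _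
  calc E.norm (lpSum r₀ x) * F.norm (lpSum r₁ y)
      ≤ K₀ * (∑ k, c k ^ q) ^ (1 / r₀) * (K₁ * (∑ k, c k ^ q) ^ (1 / r₁)) :=
        mul_le_mul (E.norm_lpSum_le hE hr₀ hK₀ hx (fun k => (hc₀ k).le) hxc)
          (F.norm_lpSum_le hF hr₁ hK₁ hy (fun k => (hc₀ k).le) hyc) (F.norm_nonneg _)
          (by positivity)
    _ = K₀ * K₁ * (∑ k, c k ^ q) ^ (1 / q) := by
        rw [hrq.one_div_eq, rpow_add' hS (by rw [← hrq.one_div_eq]; positivity)]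
        ring

theorem pConvexOn_prodSet (hrq : r₀.HolderTriple r₁ q) (hK₀ : 0 ≤ K₀) (hK₁ : 0 ≤ K₁)
    (hE : PConvexOn E.carrier E.norm r₀ K₀) (hF : PConvexOn F.carrier F.norm r₁ K₁) :
    PConvexOn (prodSet E F) (prodNorm E F) q (K₀ * K₁) := by
  intro n z hz
  have hε ε (hε : 0 < ε) := lpSum_mem_prodSet_and_prodNorm_le hrq hK₀ hK₁ hE hF hz
    (c := fun k => prodNorm E F (z k) + ε) fun k => lt_add_of_pos_right _ hε
  refine ⟨(hε 1 one_pos).1, ge_of_tendsto (x := 𝓝[>] 0) ?_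
    (eventually_nhdsWithin_of_forall fun ε h => (hε ε h).2)⟩
  have hq := hrq.pos'
  have hcont : Continuous fun ε : ℝ =>
      K₀ * K₁ * (∑ k, (prodNorm E F (z k) + ε) ^ q) ^ (1 / q) := by
    fun_prop (disch := positivity)
  simpa using (hcont.tendsto 0).mono_left nhdsWithin_le_nhds

end Product

theorem add_mem_prodSet_and_prodNorm_add_le {E F : IdealSpace μ}
    (h : PConvexOn (prodSet E F) (prodNorm E F) 1 1) {z₁ z₂ : α → ℝ} (hz₁ : z₁ ∈ prodSet E F)
    (hz₂ : z₂ ∈ prodSet E F) :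
    z₁ + z₂ ∈ prodSet E F ∧ prodNorm E F (z₁ + z₂) ≤ prodNorm E F z₁ + prodNorm E F z₂ := by
  obtain ⟨hmem, hle⟩ := h 2 ![z₁, z₂] (Fin.forall_fin_two.2 ⟨hz₁, hz₂⟩)
  simp only [Fin.sum_univ_two, Matrix.cons_val_zero, Matrix.cons_val_one, rpow_one,
    div_one, one_mul] at hmem hle
  have hdom : ∀ᵐ a ∂μ, |(z₁ + z₂) a| ≤ |(|z₁ a| + |z₂ a|)| :=
    .of_forall fun a => (abs_add_le _ _).trans (le_abs_self _)
  exact ⟨mem_prodSet_of_ae_abs_le hmem hdom, (prodNorm_le_of_ae_abs_le hmem hdom).trans hle⟩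

/-- Theorem 3: if E is p₀-convex with constant 1, F is p₁-convex with constant 1 and
1/p₀ + 1/p₁ ≤ 1, then E ⊙ F is a normed (Banach) space, and is even p/2-convex,
where 1/p = (1/2)(1/p₀ + 1/p₁). -/
theorem product_is_Banach (E F : IdealSpace μ) (p₀ p₁ p : ℝ)
    (hp₀ : 1 ≤ p₀) (hp₁ : 1 ≤ p₁) (hsum : 1 / p₀ + 1 / p₁ ≤ 1)
    (hp : 1 / p = (1 / 2) * (1 / p₀ + 1 / p₁))
    (hE : PConvexOn E.carrier E.norm p₀ 1) (hF : PConvexOn F.carrier F.norm p₁ 1) :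
    (∀ z₁ ∈ prodSet E F, ∀ z₂ ∈ prodSet E F,
      z₁ + z₂ ∈ prodSet E F ∧
      prodNorm E F (z₁ + z₂) ≤ prodNorm E F z₁ + prodNorm E F z₂) ∧
    PConvexOn (prodSet E F) (prodNorm E F) (p / 2) 1 := by
  have hp₀pos : 0 < p₀ := zero_lt_one.trans_le hp₀
  have hp₁pos : 0 < p₁ := zero_lt_one.trans_le hp₁
  simp only [one_div] at hsum hp
  have hconj : p₀.HolderConjugate p₀.conjExponent := by
    refine .conjExponent ((inv_lt_one₀ hp₀pos).1 ?_)
    linarith [inv_pos.2 hp₁pos]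
  have hle : p₀.conjExponent ≤ p₁ := by
    rw [← inv_le_inv₀ hp₁pos hconj.symm.pos, ← hconj.one_sub_inv]
    linarith
  have h1 : PConvexOn (prodSet E F) (prodNorm E F) 1 1 := by
    simpa using pConvexOn_prodSet hconj zero_le_one zero_le_one hE (hF.of_le hconj.symm.lt.le hle)
  have htriple : p₀.HolderTriple p₁ (p / 2) :=
    ⟨by rw [inv_div, div_eq_mul_inv]; linarith, hp₀pos, hp₁pos⟩
  exact ⟨fun z₁ hz₁ z₂ hz₂ => add_mem_prodSet_and_prodNorm_add_le h1 hz₁ hz₂,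
    by simpa using pConvexOn_prodSet htriple zero_le_one zero_le_one hE hF⟩
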